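/- arXiv:1507.07095 — 4 statements merged into one kernel-verified Lean document; each statement's English description precedes it below -/
import Mathlib

section
/- Let H be a separable real Hilbert space, let θ ∈ (0,∞), let B : H → H be θ-cocoercive, let γ ∈ (0,2θ), let τ ∈ [0,∞), and let z ∈ H. Let (Ω,F,P) be a probability space, let X be a sub-σ-algebra of F, let x be an X-measurable random variable in L²(Ω,F,P;H), let u ∈ L²(Ω,F,P;H), and let ζ be a [0,∞)-valued X-measurable random variable such that E[‖u − E[u|X]‖² | X] ≤ τ‖Bx − Bz‖² + ζ P-a.s. Set ũ = u − E[u|X] + Bx. Then E[‖x − z − γ(ũ − Bz)‖² | X] ≤ ‖x − z‖² − γ(2θ − (1+τ)γ)‖Bx − Bz‖² + γ²ζ P-almost surely. -/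
open MeasureTheory Filter
open scoped RealInnerProductSpace Topology

/-!
Write `v = x - z - γ (Bx - Bz)`, which is `X`-measurable and square integrable, and
`w = u - E[u|X]`, so that the quantity to be estimated is `E[‖v - γ w‖² | X]`. Since `E[w|X] = 0`,
the pull-out property gives `E[⟪v, w⟫ | X] = ⟪v, E[w|X]⟫ = 0`, whence the conditional Pythagoras
identity `E[‖v - γ w‖² | X] = ‖v‖² + γ² E[‖w‖² | X]`. Cocoercivity gives
`‖v‖² ≤ ‖x - z‖² - γ (2θ - γ) ‖Bx - Bz‖²`, and the variance hypothesis bounds the second term.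
-/

def CocoerciveWith {H : Type*} [NormedAddCommGroup H] [InnerProductSpace ℝ H]
    (θ : ℝ) (B : H → H) : Prop :=
  ∀ x y, θ * ‖B x - B y‖ ^ 2 ≤ ⟪x - y, B x - B y⟫

namespace CocoerciveWith

variable {H : Type*} [NormedAddCommGroup H] [InnerProductSpace ℝ H] {θ : ℝ} {B : H → H}

theorem norm_sub_le (hB : CocoerciveWith θ B) (hθ : 0 < θ) (x y : H) :
    ‖B x - B y‖ ≤ θ⁻¹ * ‖x - y‖ := by
  rw [inv_mul_eq_div, le_div_iff₀ hθ]
  rcases (norm_nonneg (B x - B y)).eq_or_lt with h | h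
  · rw [← h, zero_mul]; positivity
  · nlinarith [hB x y, real_inner_le_norm (x - y) (B x - B y)]

theorem lipschitzWith (hB : CocoerciveWith θ B) (hθ : 0 < θ) :
    LipschitzWith (Real.toNNReal θ⁻¹) B :=
  LipschitzWith.of_dist_le_mul fun x y => by
    rw [dist_eq_norm, dist_eq_norm, Real.coe_toNNReal _ (inv_nonneg.mpr hθ.le)]
    exact hB.norm_sub_le hθ x y

theorem norm_sub_sub_smul_sq_le (hB : CocoerciveWith θ B) {γ : ℝ} (hγ : 0 ≤ γ) (x z : H) :
    ‖x - z - γ • (B x - B z)‖ ^ 2 ≤ ‖x - z‖ ^ 2 - γ * (2 * θ - γ) * ‖B x - B z‖ ^ 2 := by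
  rw [norm_sub_sq_real, real_inner_smul_right, norm_smul, Real.norm_eq_abs, mul_pow, sq_abs]
  nlinarith [hB x z]

end CocoerciveWith

theorem LipschitzWith.memLp_comp_sub_const {Ω E F : Type*} {m₀ : MeasurableSpace Ω}
    {μ : Measure Ω} [IsFiniteMeasure μ] [NormedAddCommGroup E] [NormedAddCommGroup F]
    {p : ENNReal} {K : NNReal} {B : E → F} (hB : LipschitzWith K B) {x : Ω → E}
    (hx : MemLp x p μ) (z : E) : MemLp (fun ω => B (x ω) - B z) p μ :=
  (hx.sub (memLp_const z)).of_le_mul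
    ((hB.continuous.comp_aestronglyMeasurable hx.1).sub aestronglyMeasurable_const)
    (ae_of_all _ fun ω => hB.norm_sub_le (x ω) z)

section ConditionalPythagoras

variable {Ω H : Type*} {m m₀ : MeasurableSpace Ω} {μ : Measure Ω}
  [NormedAddCommGroup H] [InnerProductSpace ℝ H]

theorem MeasureTheory.MemLp.integrable_inner {f g : Ω → H} (hf : MemLp f 2 μ)
    (hg : MemLp g 2 μ) : Integrable (fun ω => ⟪f ω, g ω⟫) μ :=
  memLp_one_iff_integrable.1 <| (innerSL ℝ).memLp_of_bilin 1 hf hg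

variable [CompleteSpace H]

theorem condExp_sub_condExp_ae_eq_zero (hm : m ≤ m₀) [SigmaFinite (μ.trim hm)] {u : Ω → H}
    (hu : Integrable u μ) : μ[u - μ[u | m] | m] =ᵐ[μ] 0 := by
  filter_upwards [condExp_sub hu integrable_condExp m] with ω h
  rw [h, condExp_of_stronglyMeasurable hm stronglyMeasurable_condExp integrable_condExp]
  exact sub_self _

theorem condExp_norm_add_sq_ae_eq [IsFiniteMeasure μ] (hm : m ≤ m₀) {v w : Ω → H}
    (hv_meas : AEStronglyMeasurable[m] v μ) (hv : MemLp v 2 μ) (hw : MemLp w 2 μ)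
    (hw0 : μ[w | m] =ᵐ[μ] 0) :
    μ[fun ω => ‖v ω + w ω‖ ^ 2 | m] =ᵐ[μ] fun ω => ‖v ω‖ ^ 2 + μ[fun ω => ‖w ω‖ ^ 2 | m] ω := by
  have hv_sq : Integrable (fun ω => ‖v ω‖ ^ 2) μ :=
    (memLp_two_iff_integrable_sq_norm hv.1).mp hv
  have hw_sq : Integrable (fun ω => ‖w ω‖ ^ 2) μ :=
    (memLp_two_iff_integrable_sq_norm hw.1).mp hw
  have hvw : Integrable (fun ω => ⟪v ω, w ω⟫) μ := hv.integrable_inner hw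
  have hcross : μ[fun ω => ⟪v ω, w ω⟫ | m] =ᵐ[μ] 0 := by
    filter_upwards [condExp_bilin_of_aestronglyMeasurable_left (innerSL ℝ) hv_meas hvw
      (hw.integrable one_le_two), hw0] with ω h h0
    rwa [h0, Pi.zero_apply, map_zero] at h
  have hv_self : μ[fun ω => ‖v ω‖ ^ 2 | m] =ᵐ[μ] fun ω => ‖v ω‖ ^ 2 :=
    condExp_of_aestronglyMeasurable' hm (by fun_prop) hv_sq
  have expand : (fun ω => ‖v ω + w ω‖ ^ 2)
      = (fun ω => ‖v ω‖ ^ 2) + (2 : ℝ) • (fun ω => ⟪v ω, w ω⟫) + fun ω => ‖w ω‖ ^ 2 := by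
    funext ω
    simp only [Pi.add_apply, Pi.smul_apply, smul_eq_mul, norm_add_sq_real]
  rw [expand]
  filter_upwards [condExp_add (hv_sq.add (hvw.smul (2 : ℝ))) hw_sq m,
    condExp_add hv_sq (hvw.smul (2 : ℝ)) m, condExp_smul (2 : ℝ) (fun ω => ⟪v ω, w ω⟫) m,
    hcross, hv_self] with ω h₁ h₂ h₃ h₄ h₅
  simp [h₁, h₂, h₃, h₄, h₅]

theorem condExp_norm_add_smul_sub_condExp_sq_ae_eq [IsFiniteMeasure μ] (hm : m ≤ m₀)
    {v u : Ω → H} (hv_meas : AEStronglyMeasurable[m] v μ) (hv : MemLp v 2 μ) (hu : MemLp u 2 μ)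
    (c : ℝ) :
    μ[fun ω => ‖v ω + c • (u ω - μ[u | m] ω)‖ ^ 2 | m]
      =ᵐ[μ] fun ω => ‖v ω‖ ^ 2 + c ^ 2 * μ[fun ω => ‖u ω - μ[u | m] ω‖ ^ 2 | m] ω := by
  have hw0 : μ[c • (u - μ[u | m]) | m] =ᵐ[μ] 0 := by
    filter_upwards [condExp_smul c (u - μ[u | m]) m,
      condExp_sub_condExp_ae_eq_zero hm (hu.integrable one_le_two)] with ω h h0
    rw [h, Pi.smul_apply, h0, Pi.zero_apply, smul_zero]
  have hw_sq : (fun ω => ‖c • (u ω - μ[u | m] ω)‖ ^ 2)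
      = c ^ 2 • fun ω => ‖u ω - μ[u | m] ω‖ ^ 2 := by
    funext ω
    simp only [Pi.smul_apply, smul_eq_mul, norm_smul, mul_pow, Real.norm_eq_abs, sq_abs]
  filter_upwards [condExp_norm_add_sq_ae_eq hm hv_meas hv
    ((hu.sub (hu.condExp one_le_two)).const_smul c) hw0,
    condExp_smul (c ^ 2) (fun ω => ‖u ω - μ[u | m] ω‖ ^ 2) m] with ω h_pyth h_smul
  simp only [Pi.smul_apply, Pi.sub_apply] at h_pyth
  rw [h_pyth, hw_sq, h_smul, Pi.smul_apply, smul_eq_mul]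

end ConditionalPythagoras

theorem stochastic_forward_step_descent_general
    {Ω : Type*} {m0 : MeasurableSpace Ω} {P : Measure Ω} [IsProbabilityMeasure P]
    {H : Type*} [NormedAddCommGroup H] [InnerProductSpace ℝ H] [CompleteSpace H]
    [SecondCountableTopology H] [MeasurableSpace H] [BorelSpace H]
    (θ : ℝ) (hθ : 0 < θ)
    (B : H → H) (hB : ∀ x y : H, θ * ‖B x - B y‖ ^ 2 ≤ ⟪x - y, B x - B y⟫)
    (γ : ℝ) (hγ : γ ∈ Set.Ioo 0 (2 * θ)) (τ : ℝ) (z : H)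
    (m : MeasurableSpace Ω) (hm : m ≤ m0)
    (x : Ω → H) (hx_meas : Measurable[m] x) (hxL2 : MemLp x 2 P)
    (u : Ω → H) (huL2 : MemLp u 2 P)
    (ζ : Ω → ℝ)
    (hvar : ∀ᵐ ω ∂P,
      (P[fun ω' => ‖u ω' - (P[u | m]) ω'‖ ^ 2 | m]) ω
        ≤ τ * ‖B (x ω) - B z‖ ^ 2 + ζ ω) :
    ∀ᵐ ω ∂P,
      (P[fun ω' =>
          ‖x ω' - z - γ • ((u ω' - (P[u | m]) ω' + B (x ω')) - B z)‖ ^ 2 | m]) ω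
        ≤ ‖x ω - z‖ ^ 2 - γ * (2 * θ - (1 + τ) * γ) * ‖B (x ω) - B z‖ ^ 2
          + γ ^ 2 * ζ ω := by
  have hB_lip := CocoerciveWith.lipschitzWith hB hθ
  set v : Ω → H := fun ω => x ω - z - γ • (B (x ω) - B z)
  have hv_meas : StronglyMeasurable[m] v :=
    (hx_meas.stronglyMeasurable.sub stronglyMeasurable_const).sub
      (((hB_lip.continuous.comp_stronglyMeasurable hx_meas.stronglyMeasurable).sub
        stronglyMeasurable_const).const_smul γ)
  have hv : MemLp v 2 P :=
    (hxL2.sub (memLp_const z)).sub ((hB_lip.memLp_comp_sub_const hxL2 z).const_smul γ)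
  have h_split : (fun ω => ‖x ω - z - γ • ((u ω - P[u | m] ω + B (x ω)) - B z)‖ ^ 2)
      = fun ω => ‖v ω + (-γ) • (u ω - P[u | m] ω)‖ ^ 2 := by
    funext ω
    congr 2
    module
  rw [h_split]
  filter_upwards [condExp_norm_add_smul_sub_condExp_sq_ae_eq hm hv_meas.aestronglyMeasurable hv
    huL2 (-γ), hvar] with ω h_pyth h_var
  rw [h_pyth, neg_sq]
  have h_step := CocoerciveWith.norm_sub_sub_smul_sq_le hB hγ.1.le (x ω) z
  have h_noise := mul_le_mul_of_nonneg_left h_var (sq_nonneg γ)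
  linarith

/-- **Conditional descent inequality for the stochastic forward step.**
With a cocoercive operator B, a conditional variance bound on the stochastic
approximation u, and the recentered approximation
utilde = u − E[u|X] + B x, one has a.s.
E[ ‖x − z − γ(utilde − Bz)‖² | X ]
  ≤ ‖x − z‖² − γ(2θ − (1+τ)γ)‖Bx − Bz‖² + γ²ζ. -/
theorem stochastic_forward_step_descent
    {Ω : Type*} {m0 : MeasurableSpace Ω} {P : Measure Ω} [IsProbabilityMeasure P]
    {H : Type*} [NormedAddCommGroup H] [InnerProductSpace ℝ H] [CompleteSpace H]
    [SecondCountableTopology H] [MeasurableSpace H] [BorelSpace H]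
    (θ : ℝ) (hθ : 0 < θ)
    (B : H → H) (hB : ∀ x y : H, θ * ‖B x - B y‖ ^ 2 ≤ ⟪x - y, B x - B y⟫)
    (γ : ℝ) (hγ : γ ∈ Set.Ioo 0 (2 * θ)) (τ : ℝ) (hτ : 0 ≤ τ) (z : H)
    (m : MeasurableSpace Ω) (hm : m ≤ m0)
    (x : Ω → H) (hx_meas : Measurable[m] x) (hxL2 : MemLp x 2 P)
    (u : Ω → H) (huL2 : MemLp u 2 P)
    (ζ : Ω → ℝ) (hζ_meas : Measurable[m] ζ) (hζ_nonneg : ∀ ω, 0 ≤ ζ ω)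
    (hvar : ∀ᵐ ω ∂P,
      (P[fun ω' => ‖u ω' - (P[u | m]) ω'‖ ^ 2 | m]) ω
        ≤ τ * ‖B (x ω) - B z‖ ^ 2 + ζ ω) :
    ∀ᵐ ω ∂P,
      (P[fun ω' =>
          ‖x ω' - z - γ • ((u ω' - (P[u | m]) ω' + B (x ω')) - B z)‖ ^ 2 | m]) ω
        ≤ ‖x ω - z‖ ^ 2 - γ * (2 * θ - (1 + τ) * γ) * ‖B (x ω) - B z‖ ^ 2
          + γ ^ 2 * ζ ω :=
  stochastic_forward_step_descent_general θ hθ B hB γ hγ τ z m hm x hx_meas hxL2 u huL2 ζ hvar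
end

section
/- Let H be a real Hilbert space, let θ ∈ (0,∞), let B : H → H be θ-cocoercive, let γ ∈ (0,2θ], let J : H → H be firmly nonexpansive, and set T = J ∘ (Id − γB). Let z ∈ H satisfy Tz = z. Then for every x ∈ H, ‖Bx − Bz‖² ≤ (1/(γθ))(1 + γ/θ) ‖x − z‖ · ‖Tx − x‖. -/
/-!
Write `b = Bx - Bz` and `w = Tx`. Cocoercivity gives `θ‖b‖ ≤ ‖x - z‖` and
`θ‖b‖² ≤ ⟪x - z, b⟫ = ⟪x - w, b⟫ + ⟪w - z, b⟫`. The first term is at most `‖x - w‖‖b‖`.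
Firm nonexpansiveness of `J` at `x - γBx` and `z - γBz` gives
`γ⟪w - z, b⟫ ≤ ⟪w - z, x - w⟫ ≤ ‖w - z‖‖x - w‖`, and `‖w - z‖ ≤ ‖x - z‖` because `T` is
nonexpansive. Combining, `θ‖b‖² ≤ (1/θ + 1/γ)‖x - z‖‖x - w‖`.
-/

open scoped RealInnerProductSpace

section

variable {H : Type*} [NormedAddCommGroup H] [InnerProductSpace ℝ H]

def Cocoercive (θ : ℝ) (B : H → H) : Prop :=
  ∀ x y : H, θ * ‖B x - B y‖ ^ 2 ≤ ⟪x - y, B x - B y⟫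

def FirmlyNonexpansive (J : H → H) : Prop :=
  ∀ x y : H, 0 ≤ ⟪J x - J y, (x - J x) - (y - J y)⟫

theorem mul_norm_le_norm_of_mul_norm_sq_le_inner {θ : ℝ} {a b : H}
    (h : θ * ‖b‖ ^ 2 ≤ ⟪a, b⟫) : θ * ‖b‖ ≤ ‖a‖ := by
  rcases (norm_nonneg b).eq_or_lt with hb | hb
  · rw [← hb, mul_zero]
    exact norm_nonneg a
  · refine le_of_mul_le_mul_right ?_ hb
    calc θ * ‖b‖ * ‖b‖ = θ * ‖b‖ ^ 2 := by ring
      _ ≤ ⟪a, b⟫ := h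
      _ ≤ ‖a‖ * ‖b‖ := real_inner_le_norm a b

theorem norm_sub_smul_le_of_mul_norm_sq_le_inner {θ γ : ℝ} {a b : H}
    (h : θ * ‖b‖ ^ 2 ≤ ⟪a, b⟫) (hγ₀ : 0 ≤ γ) (hγ : γ ≤ 2 * θ) : ‖a - γ • b‖ ≤ ‖a‖ := by
  refine le_of_sq_le_sq ?_ (norm_nonneg a)
  have hγb : 0 ≤ γ * (2 * θ - γ) * ‖b‖ ^ 2 := by
    have : 0 ≤ 2 * θ - γ := by linarith
    positivity
  calc ‖a - γ • b‖ ^ 2 = ‖a‖ ^ 2 - 2 * γ * ⟪a, b⟫ + γ ^ 2 * ‖b‖ ^ 2 := by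
        rw [norm_sub_sq_real, real_inner_smul_right, norm_smul, Real.norm_of_nonneg hγ₀]; ring
    _ ≤ ‖a‖ ^ 2 - 2 * γ * (θ * ‖b‖ ^ 2) + γ ^ 2 * ‖b‖ ^ 2 := by gcongr
    _ ≤ ‖a‖ ^ 2 := by linarith

namespace Cocoercive

variable {θ : ℝ} {B : H → H}

theorem mul_norm_sub_le (hB : Cocoercive θ B) (x y : H) : θ * ‖B x - B y‖ ≤ ‖x - y‖ :=
  mul_norm_le_norm_of_mul_norm_sq_le_inner (hB x y)

theorem norm_forwardStep_sub_le (hB : Cocoercive θ B) {γ : ℝ} (hγ₀ : 0 ≤ γ) (hγ : γ ≤ 2 * θ)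
    (x y : H) : ‖(x - γ • B x) - (y - γ • B y)‖ ≤ ‖x - y‖ := by
  have hsub : (x - γ • B x) - (y - γ • B y) = (x - y) - γ • (B x - B y) := by
    rw [smul_sub]; abel
  rw [hsub]
  exact norm_sub_smul_le_of_mul_norm_sq_le_inner (hB x y) hγ₀ hγ

end Cocoercive

namespace FirmlyNonexpansive

variable {J : H → H}

theorem cocoercive_one (hJ : FirmlyNonexpansive J) : Cocoercive 1 J := by
  intro x y
  have h := hJ x y
  rw [one_mul]
  rwa [show (x - J x) - (y - J y) = (x - y) - (J x - J y) by abel, inner_sub_right,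
    real_inner_self_eq_norm_sq, sub_nonneg, real_inner_comm] at h

theorem norm_sub_le (hJ : FirmlyNonexpansive J) (x y : H) : ‖J x - J y‖ ≤ ‖x - y‖ := by
  simpa using hJ.cocoercive_one.mul_norm_sub_le x y

theorem smul_inner_le_inner_of_fixedPoint (hJ : FirmlyNonexpansive J) {B : H → H} {γ : ℝ}
    {z : H} (hz : J (z - γ • B z) = z) (x : H) :
    γ * ⟪J (x - γ • B x) - z, B x - B z⟫
      ≤ ⟪J (x - γ • B x) - z, x - J (x - γ • B x)⟫ := by
  have h := hJ (x - γ • B x) (z - γ • B z)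
  rw [hz, show x - γ • B x - J (x - γ • B x) - (z - γ • B z - z)
      = (x - J (x - γ • B x)) - γ • (B x - B z) by rw [smul_sub]; abel,
    inner_sub_right, real_inner_smul_right, sub_nonneg] at h
  exact h

end FirmlyNonexpansive

end

/-- **Quantitative bound on the cocoercive-operator gap via the
forward-backward residual.** For a θ-cocoercive B, γ ∈ (0,2θ], a firmly
nonexpansive J, T = J ∘ (Id − γB) and a fixed point z of T, one has
‖Bx − Bz‖² ≤ (1/(γθ))(1 + γ/θ)‖x − z‖·‖Tx − x‖ for every x. -/
theorem cocoercive_gap_bound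
    {H : Type*} [NormedAddCommGroup H] [InnerProductSpace ℝ H]
    (θ : ℝ) (hθ : 0 < θ)
    (B : H → H) (hB : ∀ x y : H, θ * ‖B x - B y‖ ^ 2 ≤ ⟪x - y, B x - B y⟫)
    (γ : ℝ) (hγ : γ ∈ Set.Ioc 0 (2 * θ))
    (J : H → H)
    (hJ : ∀ x y : H, 0 ≤ ⟪J x - J y, (x - J x) - (y - J y)⟫)
    (z : H) (hz : J (z - γ • B z) = z) :
    ∀ x : H, ‖B x - B z‖ ^ 2
      ≤ (1 / (γ * θ)) * (1 + γ / θ) * (‖x - z‖ * ‖J (x - γ • B x) - x‖) := by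
  intro x
  obtain ⟨hγ₀, hγ⟩ := hγ
  have hBc : Cocoercive θ B := hB
  have hJf : FirmlyNonexpansive J := hJ
  set b := B x - B z
  set w := J (x - γ • B x)
  have hBb : θ * ‖b‖ ≤ ‖x - z‖ := hBc.mul_norm_sub_le x z
  have hwz : ‖w - z‖ ≤ ‖x - z‖ := by
    calc ‖w - z‖ = ‖w - J (z - γ • B z)‖ := by rw [hz]
      _ ≤ ‖(x - γ • B x) - (z - γ • B z)‖ := hJf.norm_sub_le _ _
      _ ≤ ‖x - z‖ := hBc.norm_forwardStep_sub_le hγ₀.le hγ x z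
  have hwb : γ * ⟪w - z, b⟫ ≤ ‖w - z‖ * ‖x - w‖ :=
    (hJf.smul_inner_le_inner_of_fixedPoint hz x).trans (real_inner_le_norm _ _)
  have hxb : ⟪x - w, b⟫ ≤ ‖x - w‖ * ‖b‖ := real_inner_le_norm _ _
  have hsplit : ⟪x - z, b⟫ = ⟪x - w, b⟫ + ⟪w - z, b⟫ := by
    rw [← inner_add_left, sub_add_sub_cancel]
  have hmain : γ * θ ^ 2 * ‖b‖ ^ 2 ≤ (θ + γ) * (‖x - z‖ * ‖x - w‖) :=
    calc γ * θ ^ 2 * ‖b‖ ^ 2 = γ * θ * (θ * ‖b‖ ^ 2) := by ring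
      _ ≤ γ * θ * ⟪x - z, b⟫ := by gcongr; exact hBc x z
      _ = γ * θ * ⟪x - w, b⟫ + θ * (γ * ⟪w - z, b⟫) := by rw [hsplit]; ring
      _ ≤ γ * θ * (‖x - w‖ * ‖b‖) + θ * (‖w - z‖ * ‖x - w‖) := by gcongr
      _ = γ * ‖x - w‖ * (θ * ‖b‖) + θ * (‖w - z‖ * ‖x - w‖) := by ring
      _ ≤ γ * ‖x - w‖ * ‖x - z‖ + θ * (‖x - z‖ * ‖x - w‖) := by gcongr
      _ = (θ + γ) * (‖x - z‖ * ‖x - w‖) := by ring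
  have hconst : 1 / (γ * θ) * (1 + γ / θ) = (θ + γ) / (γ * θ ^ 2) := by
    field_simp
  rw [norm_sub_rev w x, hconst, div_mul_eq_mul_div, le_div_iff₀ (by positivity)]
  linarith
end

section
/- Let H be a real Hilbert space, let θ ∈ (0,∞), let B : H → H be θ-cocoercive, let γ ∈ (0,2θ], let J : H → H be nonexpansive, and set T = J ∘ (Id − γB). Let λ ∈ (0,1], let x, u, a ∈ H, and set x⁺ = x + λ(J(x − γu) + a − x). Then ‖Tx⁺ − x⁺‖ ≤ ‖Tx − x‖ + 2λ(γ‖u − Bx‖ + ‖a‖). -/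
/-!
Cocoercivity of `B` with `γ ≤ 2θ` makes `Id - γB` nonexpansive, so `T` is nonexpansive. The
update is a relaxed step `x⁺ = x + λ(Tx - x + e)` of `T` with error
`e = J(x - γu) - J(x - γBx) + a`, and `‖e‖ ≤ γ‖u - Bx‖ + ‖a‖` because `J` is nonexpansive.
For any nonexpansive `T`, comparing `Tx⁺` with `Tx` gives
`‖Tx⁺ - x⁺‖ ≤ ‖x⁺ - x‖ + ‖Tx - x⁺‖ ≤ (λ + (1 - λ))‖Tx - x‖ + 2λ‖e‖`.
-/

open scoped RealInnerProductSpace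

theorem lipschitzWith_sub_smul_of_cocoercive {H : Type*} [NormedAddCommGroup H]
    [InnerProductSpace ℝ H] {θ γ : ℝ} {B : H → H}
    (hB : ∀ x y : H, θ * ‖B x - B y‖ ^ 2 ≤ ⟪x - y, B x - B y⟫)
    (hγ₀ : 0 ≤ γ) (hγ : γ ≤ 2 * θ) :
    LipschitzWith 1 (fun x => x - γ • B x) := by
  refine .of_dist_le_mul fun x y => ?_
  rw [NNReal.coe_one, one_mul, dist_eq_norm, dist_eq_norm]
  have hsplit : x - γ • B x - (y - γ • B y) = (x - y) - γ • (B x - B y) := by module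
  refine le_of_sq_le_sq ?_ (norm_nonneg _)
  -- `‖(x - y) - γ(Bx - By)‖² ≤ ‖x - y‖² - γ(2θ - γ)‖Bx - By‖²`
  rw [hsplit, norm_sub_sq_real, real_inner_smul_right, norm_smul, Real.norm_eq_abs,
    abs_of_nonneg hγ₀]
  nlinarith [mul_le_mul_of_nonneg_left (hB x y) hγ₀,
    mul_nonneg (mul_nonneg hγ₀ (sub_nonneg.2 hγ)) (sq_nonneg ‖B x - B y‖)]

section RelaxedStep

variable {E : Type*} [SeminormedAddCommGroup E] [NormedSpace ℝ E]

theorem norm_sub_smul_sub_sub_smul_le {J : E → E} (hJ : LipschitzWith 1 J) {γ : ℝ}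
    (hγ : 0 ≤ γ) (x u v : E) :
    ‖J (x - γ • u) - J (x - γ • v)‖ ≤ γ * ‖u - v‖ := by
  calc ‖J (x - γ • u) - J (x - γ • v)‖ ≤ ‖(x - γ • u) - (x - γ • v)‖ := by
        simpa using hJ.norm_sub_le (x - γ • u) (x - γ • v)
    _ = γ * ‖u - v‖ := by
        rw [sub_sub_sub_cancel_left, ← smul_sub, norm_sub_rev, norm_smul, Real.norm_eq_abs,
          abs_of_nonneg hγ, norm_sub_rev]

theorem norm_residual_relaxed_step_le {T : E → E} (hT : LipschitzWith 1 T) {lam : ℝ}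
    (hlam₀ : 0 ≤ lam) (hlam₁ : lam ≤ 1) (x e : E) :
    ‖T (x + lam • (T x - x + e)) - (x + lam • (T x - x + e))‖
      ≤ ‖T x - x‖ + 2 * lam * ‖e‖ := by
  set x' := x + lam • (T x - x + e)
  have hstep : ‖x' - x‖ ≤ lam * ‖T x - x‖ + lam * ‖e‖ := by
    calc ‖x' - x‖ = ‖lam • (T x - x) + lam • e‖ := by congr 1; module
      _ ≤ lam * ‖T x - x‖ + lam * ‖e‖ := by
        refine (norm_add_le _ _).trans_eq ?_
        rw [norm_smul, norm_smul, Real.norm_eq_abs, abs_of_nonneg hlam₀]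
  have hgap : ‖T x - x'‖ ≤ (1 - lam) * ‖T x - x‖ + lam * ‖e‖ := by
    calc ‖T x - x'‖ = ‖(1 - lam) • (T x - x) - lam • e‖ := by congr 1; module
      _ ≤ (1 - lam) * ‖T x - x‖ + lam * ‖e‖ := by
        refine (norm_sub_le _ _).trans_eq ?_
        rw [norm_smul, norm_smul, Real.norm_eq_abs, Real.norm_eq_abs,
          abs_of_nonneg (sub_nonneg.2 hlam₁), abs_of_nonneg hlam₀]
  calc ‖T x' - x'‖ ≤ ‖T x' - T x‖ + ‖T x - x'‖ :=
        norm_sub_le_norm_sub_add_norm_sub _ _ _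
    _ ≤ ‖x' - x‖ + ‖T x - x'‖ := by
        gcongr
        simpa using hT.norm_sub_le x' x
    _ ≤ ‖T x - x‖ + 2 * lam * ‖e‖ := by linarith

end RelaxedStep

theorem residual_one_step_bound_general
    {H : Type*} [NormedAddCommGroup H] [InnerProductSpace ℝ H]
    (θ : ℝ)
    (B : H → H) (hB : ∀ x y : H, θ * ‖B x - B y‖ ^ 2 ≤ ⟪x - y, B x - B y⟫)
    (γ : ℝ) (hγ : γ ∈ Set.Ioc 0 (2 * θ))
    (J : H → H) (hJ : ∀ x y : H, ‖J x - J y‖ ≤ ‖x - y‖)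
    (lam : ℝ) (hlam : lam ∈ Set.Ioc (0 : ℝ) 1)
    (x u a x' : H) (hx' : x' = x + lam • (J (x - γ • u) + a - x)) :
    ‖J (x' - γ • B x') - x'‖
      ≤ ‖J (x - γ • B x) - x‖ + 2 * lam * (γ * ‖u - B x‖ + ‖a‖) := by
  obtain ⟨hγ₀, hγ⟩ := hγ
  obtain ⟨hlam₀, hlam₁⟩ := hlam
  have hJ : LipschitzWith 1 J := .of_dist_le_mul fun x y => by
    simpa [dist_eq_norm] using hJ x y
  have hT : LipschitzWith 1 (fun y => J (y - γ • B y)) := by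
    rw [← mul_one (1 : NNReal)]
    exact hJ.comp (lipschitzWith_sub_smul_of_cocoercive hB hγ₀.le hγ)
  set e := J (x - γ • u) - J (x - γ • B x) + a
  have he : ‖e‖ ≤ γ * ‖u - B x‖ + ‖a‖ :=
    (norm_add_le _ _).trans (by gcongr; exact norm_sub_smul_sub_sub_smul_le hJ hγ₀.le x u (B x))
  have hx'e : x' = x + lam • (J (x - γ • B x) - x + e) := by rw [hx']; module
  calc ‖J (x' - γ • B x') - x'‖ ≤ ‖J (x - γ • B x) - x‖ + 2 * lam * ‖e‖ := by
        subst hx'e; exact norm_residual_relaxed_step_le hT hlam₀.le hlam₁ x e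
    _ ≤ _ := by gcongr

/-- **One-step control of the fixed-point residual of T = J ∘ (Id − γB) along
the stochastic forward-backward update.** -/
theorem residual_one_step_bound
    {H : Type*} [NormedAddCommGroup H] [InnerProductSpace ℝ H]
    (θ : ℝ) (hθ : 0 < θ)
    (B : H → H) (hB : ∀ x y : H, θ * ‖B x - B y‖ ^ 2 ≤ ⟪x - y, B x - B y⟫)
    (γ : ℝ) (hγ : γ ∈ Set.Ioc 0 (2 * θ))
    (J : H → H) (hJ : ∀ x y : H, ‖J x - J y‖ ≤ ‖x - y‖)
    (lam : ℝ) (hlam : lam ∈ Set.Ioc (0 : ℝ) 1)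
    (x u a x' : H) (hx' : x' = x + lam • (J (x - γ • u) + a - x)) :
    ‖J (x' - γ • B x') - x'‖
      ≤ ‖J (x - γ • B x) - x‖ + 2 * lam * (γ * ‖u - B x‖ + ‖a‖) :=
  residual_one_step_bound_general θ B hB γ hγ J hJ lam hlam x u a x' hx'
end

section
/- Let H be a separable real Hilbert space, let θ ∈ (0,∞), let B : H → H be θ-cocoercive, let γ ∈ (0,2θ], and let J : H → H be nonexpansive. Let (Ω,F,P) be a probability space, let X be a sub-σ-algebra of F, let x be an X-measurable random variable in L²(Ω,F,P;H), let u ∈ L²(Ω,F,P;H), set r = x − γu and R = Id − γB, and let z ∈ H. Then, P-almost surely, ‖x − γBx − J(x − γBx) + γBz‖² ≤ 3 ( E[‖r − Jr − Rz + z‖² | X] + 8θ² E[‖u − Bx‖² | X] ). -/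
open MeasureTheory
open scoped RealInnerProductSpace NNReal ENNReal

/-!
With `a = x - γ B x` and `r = x - γ u`, nonexpansiveness of `J` gives pointwise
`‖a - J a + γ B z‖ ≤ ‖r - J r + γ B z‖ + 2 ‖a - r‖ = ‖r - J r + γ B z‖ + 2γ ‖u - B x‖`, and with
`γ ≤ 2θ` and `(s + b)² ≤ 3 s² + (3/2) b²` this squares to the claimed bound without the
conditional expectations. Cocoercivity makes `B` Lipschitz, so every term is integrable; the
left-hand side is `X`-measurable, so it survives conditioning on `X`, while the right-hand side
is handled by monotonicity and linearity of the conditional expectation.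
-/

theorem LipschitzWith.comp_memLp_of_isFiniteMeasure {α E F : Type*} {mα : MeasurableSpace α}
    {μ : Measure α} [IsFiniteMeasure μ] [NormedAddCommGroup E] [NormedAddCommGroup F]
    {p : ℝ≥0∞} {K : ℝ≥0} {g : E → F} {f : α → E} (hg : LipschitzWith K g) (hf : MemLp f p μ) :
    MemLp (g ∘ f) p μ := by
  have h := (hg.sub (LipschitzWith.const (g 0))).comp_memLp (by simp) hf
  convert h.add (memLp_const (g 0)) using 1
  ext; simp

theorem lipschitzWith_of_cocoercive {H : Type*} [NormedAddCommGroup H] [InnerProductSpace ℝ H]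
    {θ : ℝ} (hθ : 0 < θ) {B : H → H}
    (hB : ∀ x y : H, θ * ‖B x - B y‖ ^ 2 ≤ ⟪x - y, B x - B y⟫) :
    LipschitzWith (Real.toNNReal θ⁻¹) B := by
  refine LipschitzWith.of_dist_le_mul fun x y => ?_
  rw [dist_eq_norm, dist_eq_norm, Real.coe_toNNReal _ (by positivity), ← div_eq_inv_mul,
    le_div_iff₀ hθ]
  have h := (hB x y).trans (real_inner_le_norm _ _)
  rcases (norm_nonneg (B x - B y)).eq_or_lt with h0 | h0
  · rw [← h0]; simp
  · nlinarith

section Nonexpansive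

variable {E : Type*} [SeminormedAddCommGroup E] {J : E → E}

theorem norm_sub_apply_add_le (hJ : ∀ x y : E, ‖J x - J y‖ ≤ ‖x - y‖) (a r w : E) :
    ‖a - J a + w‖ ≤ ‖r - J r + w‖ + 2 * ‖a - r‖ :=
  calc ‖a - J a + w‖ = ‖(r - J r + w) + (a - r) - (J a - J r)‖ := by congr 1; abel
    _ ≤ ‖r - J r + w‖ + ‖a - r‖ + ‖J a - J r‖ := norm_sub_le_of_le (norm_add_le _ _) le_rfl
    _ ≤ ‖r - J r + w‖ + 2 * ‖a - r‖ := by linarith [hJ a r]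

lemma sq_add_le_three_mul_sq_add (a b : ℝ) : (a + b) ^ 2 ≤ 3 * a ^ 2 + 3 / 2 * b ^ 2 := by
  nlinarith [sq_nonneg (a - b / 2)]

theorem norm_sub_apply_add_sq_le [NormedSpace ℝ E] (hJ : ∀ x y : E, ‖J x - J y‖ ≤ ‖x - y‖)
    {θ γ : ℝ} (hγ : 0 ≤ γ) (hγθ : γ ≤ 2 * θ) (x u b w : E) :
    ‖x - γ • b - J (x - γ • b) + w‖ ^ 2
      ≤ 3 * (‖x - γ • u - J (x - γ • u) + w‖ ^ 2 + 8 * θ ^ 2 * ‖u - b‖ ^ 2) := by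
  set s := ‖x - γ • u - J (x - γ • u) + w‖
  set t := ‖u - b‖
  have hdist : ‖(x - γ • b) - (x - γ • u)‖ = γ * t := by
    rw [show (x - γ • b) - (x - γ • u) = γ • (u - b) by rw [smul_sub]; abel, norm_smul,
      Real.norm_of_nonneg hγ]
  have hle : ‖x - γ • b - J (x - γ • b) + w‖ ≤ s + 4 * θ * t := by
    have := norm_sub_apply_add_le hJ (x - γ • b) (x - γ • u) w
    rw [hdist] at this
    nlinarith [norm_nonneg (u - b)]
  calc ‖x - γ • b - J (x - γ • b) + w‖ ^ 2 ≤ (s + 4 * θ * t) ^ 2 :=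
        pow_le_pow_left₀ (norm_nonneg _) hle 2
    _ ≤ 3 * s ^ 2 + 3 / 2 * (4 * θ * t) ^ 2 := sq_add_le_three_mul_sq_add _ _
    _ = 3 * (s ^ 2 + 8 * θ ^ 2 * t ^ 2) := by ring

end Nonexpansive

theorem ae_le_mul_condExp_add_mul_condExp {α : Type*} {m m0 : MeasurableSpace α}
    {μ : Measure α} (hm : m ≤ m0) [SigmaFinite (μ.trim hm)] {F f g : α → ℝ} (a b : ℝ)
    (hF : StronglyMeasurable[m] F) (hFi : Integrable F μ) (hfi : Integrable f μ)
    (hgi : Integrable g μ) (hle : ∀ᵐ ω ∂μ, F ω ≤ a * (f ω + b * g ω)) :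
    ∀ᵐ ω ∂μ, F ω ≤ a * (μ[f | m] ω + b * μ[g | m] ω) := by
  have hmono := condExp_mono (m := m) hFi ((hfi.add (hgi.smul b)).smul a) hle
  rw [condExp_of_stronglyMeasurable hm hF hFi] at hmono
  filter_upwards [hmono, condExp_smul a (f + b • g) m, condExp_add hfi (hgi.smul b) m,
    condExp_smul b g m] with ω hω h_smul h_add h_smul'
  simpa only [h_smul, Pi.smul_apply, h_add, Pi.add_apply, h_smul', smul_eq_mul] using hω

theorem residual_conditional_bound_general
    {Ω : Type*} {m0 : MeasurableSpace Ω} {P : Measure Ω} [IsProbabilityMeasure P]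
    {H : Type*} [NormedAddCommGroup H] [InnerProductSpace ℝ H]
    [MeasurableSpace H] [BorelSpace H]
    (θ : ℝ) (hθ : 0 < θ)
    (B : H → H) (hB : ∀ x y : H, θ * ‖B x - B y‖ ^ 2 ≤ ⟪x - y, B x - B y⟫)
    (γ : ℝ) (hγ : γ ∈ Set.Ioc 0 (2 * θ))
    (J : H → H) (hJ : ∀ x y : H, ‖J x - J y‖ ≤ ‖x - y‖)
    (m : MeasurableSpace Ω) (hm : m ≤ m0)
    (x : Ω → H) (hx_meas : Measurable[m] x) (hxL2 : MemLp x 2 P)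
    (u : Ω → H) (huL2 : MemLp u 2 P) (z : H) :
    ∀ᵐ ω ∂P,
      ‖x ω - γ • B (x ω) - J (x ω - γ • B (x ω)) + γ • B z‖ ^ 2
        ≤ 3 * ((P[fun ω' =>
              ‖(x ω' - γ • u ω') - J (x ω' - γ • u ω')
                - (z - γ • B z) + z‖ ^ 2 | m]) ω
            + 8 * θ ^ 2 * (P[fun ω' => ‖u ω' - B (x ω')‖ ^ 2 | m]) ω) := by
  have hBL := lipschitzWith_of_cocoercive hθ hB
  have hJL : LipschitzWith 1 J := .of_dist_le_mul fun a b => by simpa [dist_eq_norm] using hJ a b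
  have hBx : MemLp (B ∘ x) 2 P := hBL.comp_memLp_of_isFiniteMeasure hxL2
  have hresid {v : Ω → H} (hv : MemLp v 2 P) (c : H) :
      Integrable (fun ω => ‖v ω - J (v ω) + c‖ ^ 2) P :=
    ((hv.sub (hJL.comp_memLp_of_isFiniteMeasure hv)).add (memLp_const c)).norm.integrable_sq
  have hF : StronglyMeasurable[m]
      fun ω => ‖x ω - γ • B (x ω) - J (x ω - γ • B (x ω)) + γ • B z‖ ^ 2 := by
    have := hBL.continuous
    have := hJL.continuous
    have hcont : Continuous fun y : H => ‖y - γ • B y - J (y - γ • B y) + γ • B z‖ ^ 2 := by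
      fun_prop
    exact (hcont.measurable.comp hx_meas).stronglyMeasurable
  have hshift (v : H) : v - (z - γ • B z) + z = v + γ • B z := by abel
  simp only [hshift]
  refine ae_le_mul_condExp_add_mul_condExp hm 3 (8 * θ ^ 2) hF
    (hresid (hxL2.sub (hBx.const_smul γ)) _) (hresid (hxL2.sub (huL2.const_smul γ)) _)
    (huL2.sub hBx).norm.integrable_sq (.of_forall fun ω => ?_)
  exact norm_sub_apply_add_sq_le hJ hγ.1.le hγ.2 (x ω) (u ω) (B (x ω)) (γ • B z)

/-- **Almost sure bound on the deterministic forward-backward residual by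
conditional second moments of the stochastic residuals.** Here r = x − γu and
R = Id − γB, so that R z = z − γ • B z. -/
theorem residual_conditional_bound
    {Ω : Type*} {m0 : MeasurableSpace Ω} {P : Measure Ω} [IsProbabilityMeasure P]
    {H : Type*} [NormedAddCommGroup H] [InnerProductSpace ℝ H] [CompleteSpace H]
    [SecondCountableTopology H] [MeasurableSpace H] [BorelSpace H]
    (θ : ℝ) (hθ : 0 < θ)
    (B : H → H) (hB : ∀ x y : H, θ * ‖B x - B y‖ ^ 2 ≤ ⟪x - y, B x - B y⟫)
    (γ : ℝ) (hγ : γ ∈ Set.Ioc 0 (2 * θ))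
    (J : H → H) (hJ : ∀ x y : H, ‖J x - J y‖ ≤ ‖x - y‖)
    (m : MeasurableSpace Ω) (hm : m ≤ m0)
    (x : Ω → H) (hx_meas : Measurable[m] x) (hxL2 : MemLp x 2 P)
    (u : Ω → H) (huL2 : MemLp u 2 P) (z : H) :
    ∀ᵐ ω ∂P,
      ‖x ω - γ • B (x ω) - J (x ω - γ • B (x ω)) + γ • B z‖ ^ 2
        ≤ 3 * ((P[fun ω' =>
              ‖(x ω' - γ • u ω') - J (x ω' - γ • u ω')
                - (z - γ • B z) + z‖ ^ 2 | m]) ω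
            + 8 * θ ^ 2 * (P[fun ω' => ‖u ω' - B (x ω')‖ ^ 2 | m]) ω) :=
  residual_conditional_bound_general θ hθ B hB γ hγ J hJ m hm x hx_meas hxL2 u huL2 z
end
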